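/- arXiv:2604.23376 — 2 statements merged into one kernel-verified Lean document; each statement's English description precedes it below -/
import Mathlib

section
/- For every positive integer e there exists a positive integer n_e such that the ideal of the profinite completion Ẑ of ℤ generated by all elements λ^e − 1, where λ ranges over the units of Ẑ, contains the principal ideal n_e·Ẑ. Concretely, one may take n_e = ∏_{ℓ prime, (ℓ−1) ∣ e} ((1+ℓ)^e − 1). -/
open scoped BigOperators

instance (p : Nat.Primes) : Fact (p : ℕ).Prime := ⟨p.2⟩

/-- The profinite completion of `ℤ`, identified with `∏_ℓ ℤ_ℓ`. -/
abbrev ZHat : Type := ∀ p : Nat.Primes, ℤ_[(p : ℕ)]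


lemma isUnit_of_toZMod {p : ℕ} [Fact p.Prime] (x : ℤ_[p]) (h : PadicInt.toZMod x ≠ 0) :
    IsUnit x := by
  by_contra hu
  apply h
  rw [← RingHom.mem_ker, PadicInt.ker_toZMod]
  exact hu

lemma key_lemma {p : ℕ} [Fact p.Prime] (e n : ℕ) (he : 0 < e)
    (hdvd : (p - 1) ∣ e → ((1 + p) ^ e - 1) ∣ n) :
    ∃ u : ℤ_[p]ˣ, ((u : ℤ_[p]) ^ e - 1) ∣ (n : ℤ_[p]) := by
  by_cases hc : (p - 1) ∣ e
  · -- u = 1 + p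
    have hu : IsUnit ((1 + p : ℕ) : ℤ_[p]) := by
      apply isUnit_of_toZMod
      rw [map_natCast]
      push_cast
      simp [ZMod.natCast_self]
    refine ⟨hu.unit, ?_⟩
    rw [IsUnit.unit_spec]
    have h1 : (1:ℕ) ≤ (1 + p) ^ e := Nat.one_le_pow _ _ (by positivity)
    have : (((1 + p) ^ e - 1 : ℕ) : ℤ_[p]) = ((1 + p : ℕ) : ℤ_[p]) ^ e - 1 := by
      push_cast [h1]; ring
    rw [← this]
    exact_mod_cast Nat.cast_dvd_cast (hdvd hc)
  · -- primitive root
    obtain ⟨g, hg⟩ := IsCyclic.exists_generator (α := (ZMod p)ˣ)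
    have horder : orderOf g = p - 1 := by
      rw [orderOf_eq_card_of_forall_mem_zpowers hg, Nat.card_eq_fintype_card, ZMod.card_units]
    have hne : g ^ e ≠ 1 := by
      intro h
      exact hc (horder ▸ orderOf_dvd_of_pow_eq_one h)
    have hgz : ((g : ZMod p)) ≠ 0 := g.ne_zero
    set a : ℕ := (g : ZMod p).val with ha
    have hcast : ((a : ℤ_[p])) = (a : ℤ_[p]) := rfl
    have htz : PadicInt.toZMod ((a : ℕ) : ℤ_[p]) = (g : ZMod p) := by
      rw [map_natCast, ha, ZMod.natCast_val, ZMod.cast_id]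
    have hu : IsUnit ((a : ℕ) : ℤ_[p]) := isUnit_of_toZMod _ (by rw [htz]; exact hgz)
    have hu2 : IsUnit (((a : ℕ) : ℤ_[p]) ^ e - 1) := by
      apply isUnit_of_toZMod
      rw [map_sub, map_pow, map_one, htz]
      intro h
      apply hne
      have : ((g : ZMod p)) ^ e = 1 := by
        have := sub_eq_zero.mp h
        simpa using this
      ext
      simpa using this
    exact ⟨hu.unit, by rw [IsUnit.unit_spec]; exact hu2.dvd⟩

/-- for every `e > 0` there is `n_e > 0` (concretely
`n_e = ∏_{ℓ prime, (ℓ-1) ∣ e} ((1+ℓ)^e − 1)`) such that the ideal of `Ẑ` generated by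
all `λ^e − 1`, `λ ∈ Ẑˣ`, contains `n_e · Ẑ`. -/
theorem stmt_1 (e : ℕ) (he : 0 < e) :
    ∃ n_e : ℕ, 0 < n_e ∧
      n_e = ∏ ℓ ∈ (Finset.range (e + 2)).filter (fun ℓ => ℓ.Prime ∧ (ℓ - 1) ∣ e),
              ((1 + ℓ) ^ e - 1) ∧
      (n_e : ZHat) ∈ Ideal.span {x : ZHat | ∃ u : ZHatˣ, x = (u : ZHat) ^ e - 1} := by
  set S := (Finset.range (e + 2)).filter (fun ℓ => ℓ.Prime ∧ (ℓ - 1) ∣ e) with hS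
  set n : ℕ := ∏ ℓ ∈ S, ((1 + ℓ) ^ e - 1) with hn
  refine ⟨n, ?_, rfl, ?_⟩
  · apply Finset.prod_pos
    intro ℓ hℓ
    simp only [hS, Finset.mem_filter, Finset.mem_range] at hℓ
    have : 2 ≤ 1 + ℓ := by have := hℓ.2.1.two_le; omega
    have : 2 ^ e ≤ (1 + ℓ) ^ e := Nat.pow_le_pow_left this e
    have : 2 ≤ 2 ^ e := by calc 2 = 2^1 := rfl
                                _ ≤ 2^e := Nat.pow_le_pow_right (by norm_num) he
    omega
  · have hkey : ∀ p : Nat.Primes, ∃ u : ℤ_[(p:ℕ)]ˣ,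
        ((u : ℤ_[(p:ℕ)]) ^ e - 1) ∣ (n : ℤ_[(p:ℕ)]) := by
      intro p
      apply key_lemma e n he
      intro hd
      apply Finset.dvd_prod_of_mem
      simp only [hS, Finset.mem_filter, Finset.mem_range]
      have hp2 : 2 ≤ (p : ℕ) := p.2.two_le
      have : (p : ℕ) - 1 ≤ e := Nat.le_of_dvd he hd
      exact ⟨by omega, p.2, hd⟩
    choose u hu using hkey
    refine (Ideal.mem_span _).mpr (fun I hI => ?_)
    have hs : ((⟨fun p => (u p : ℤ_[(p:ℕ)]), fun p => ((u p)⁻¹ : ℤ_[(p:ℕ)]ˣ),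
        funext fun p => Units.mul_inv _, funext fun p => Units.inv_mul _⟩ : ZHatˣ) : ZHat) ^ e - 1
        ∈ I := hI ⟨_, rfl⟩
    have hdvd : ∃ c : ZHat,
        (n : ZHat) = ((fun p : Nat.Primes => (u p : ℤ_[(p:ℕ)])) ^ e - 1 : ZHat) * c := by
      refine ⟨fun (p : Nat.Primes) => ((hu p).choose), funext fun (p : Nat.Primes) => ?_⟩
      have := (hu p).choose_spec
      simpa using this
    obtain ⟨c, hc⟩ := hdvd
    rw [hc]
    exact Ideal.mul_mem_right _ _ hs
end

section
/- Let L/ℚ_ℓ be a finite extension with ring of integers O_L, let k, n_1,…,n_k be positive integers and V_1,…,V_k finite-dimensional L-vector spaces. Set V = ⊕_{i=1}^k L^{n_i} ⊗ V_i and let E = ∏_{i=1}^k End(O_L^{n_i}) ⊗ Id_{V_i} act on V. Let W ≤ V be an O_L-submodule and λ ∈ L with λ·E·W ⊆ W. Then there exist O_L-submodules Λ_i ≤ V_i such that λ·(⊕_{i=1}^k O_L^{n_i} ⊗_{O_L} Λ_i) ⊆ W and λ·W ⊆ ⊕_{i=1}^k O_L^{n_i} ⊗_{O_L} Λ_i.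 -/
open scoped BigOperators

/-!
Let `Λ_i` be the set of `x ∈ V_i` with `e_{i,m} ⊗ x ∈ W` for every `m`. Every vector of
`⊕ O_L^{n_i} ⊗ Λ_i` is a finite sum of such elementary tensors, so this lattice lies in `W`, and
applying `λ·Id ∈ λ·E` keeps it inside `W`. Conversely, for `w ∈ W` the matrix unit `E_{m,m'}` in
the `i`-th factor sends `w` to `e_{i,m} ⊗ w_{i,m'}`, so `λ·E·W ⊆ W` gives `λ·w_{i,m'} ∈ Λ_i`.
-/

section CoordinateSubmodule

variable {A : Type*} [CommRing A] {ι : Type*} [DecidableEq ι] {κ : ι → Type*}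
  [∀ i, DecidableEq (κ i)] {V : ι → Type*} [∀ i, AddCommGroup (V i)] [∀ i, Module A (V i)]

def coordinateSubmodule (W : Submodule A (∀ i, κ i → V i)) (i : ι) : Submodule A (V i) :=
  ⨅ m, W.comap ((LinearMap.single A (fun i => κ i → V i) i).comp
    (LinearMap.single A (fun _ => V i) m))

theorem mem_coordinateSubmodule {W : Submodule A (∀ i, κ i → V i)} {i : ι} {x : V i} :
    x ∈ coordinateSubmodule W i ↔ ∀ m, Pi.single i (Pi.single m x) ∈ W := by
  simp [coordinateSubmodule]

theorem mem_of_forall_mem_coordinateSubmodule [Fintype ι] [∀ i, Fintype (κ i)]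
    {W : Submodule A (∀ i, κ i → V i)} {v : ∀ i, κ i → V i}
    (hv : ∀ i m, v i m ∈ coordinateSubmodule W i) : v ∈ W := by
  rw [← Finset.univ_sum_single v]
  refine W.sum_mem fun i _ => ?_
  rw [← Finset.univ_sum_single (v i), ← LinearMap.single_apply A, map_sum]
  exact W.sum_mem fun m _ => mem_coordinateSubmodule.1 (hv i m) m

end CoordinateSubmodule

section MatrixStable

variable {L : Type*} [Semiring L] {A : Type*} [CommRing A] {ι : Type*} {κ : ι → Type*}
  [∀ i, Fintype (κ i)] [∀ i, DecidableEq (κ i)] {V : ι → Type*} [∀ i, AddCommGroup (V i)]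
  [∀ i, Module L (V i)] [∀ i, Module A (V i)] {W : Submodule A (∀ i, κ i → V i)} {lam : L}

theorem smul_mem_of_forall_matrix_smul_mem
    (hW : ∀ w ∈ W, ∀ g : ∀ i, Matrix (κ i) (κ i) A,
      (fun i m => lam • ∑ m', g i m m' • w i m') ∈ W)
    {w : ∀ i, κ i → V i} (hw : w ∈ W) : (fun i m => lam • w i m) ∈ W := by
  simpa [Matrix.one_apply, ite_smul, Finset.sum_ite_eq] using hW w hw 1

theorem single_single_smul_mem_of_forall_matrix_smul_mem [DecidableEq ι]
    (hW : ∀ w ∈ W, ∀ g : ∀ i, Matrix (κ i) (κ i) A,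
      (fun i m => lam • ∑ m', g i m m' • w i m') ∈ W)
    {w : ∀ i, κ i → V i} (hw : w ∈ W) (i : ι) (m m' : κ i) :
    Pi.single i (Pi.single m (lam • w i m')) ∈ W := by
  convert hW w hw (Pi.single i (Matrix.single m m' 1)) using 1
  funext j m₀
  obtain rfl | hj := eq_or_ne j i
  · obtain rfl | hm := eq_or_ne m₀ m
    · simp [Matrix.single_apply, ite_smul]
    · simp [hm.symm]
  · simp [Pi.single_eq_of_ne hj]

end MatrixStable

theorem stmt_11_general (L : Type*) [Field L] (A : Type*) [CommRing A]
    (ι : Type*) [Fintype ι] (n : ι → ℕ)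
    (V : ι → Type*) [∀ i, AddCommGroup (V i)] [∀ i, Module L (V i)]
    [∀ i, Module A (V i)]
    (W : Submodule A (∀ i, Fin (n i) → V i))
    (lam : L)
    (hW : ∀ w ∈ W, ∀ g : ∀ i, Matrix (Fin (n i)) (Fin (n i)) A,
      (fun i m => lam • ∑ m', g i m m' • w i m') ∈ W) :
    ∃ Λ : ∀ i, Submodule A (V i),
      (∀ v : ∀ i, Fin (n i) → V i, (∀ i m, v i m ∈ Λ i) →
        (fun i m => lam • v i m) ∈ W) ∧
      (∀ w ∈ W, ∀ i m, lam • w i m ∈ Λ i) := by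
  classical
  refine ⟨coordinateSubmodule W, fun v hv => ?_, fun w hw i m => ?_⟩
  · exact smul_mem_of_forall_matrix_smul_mem hW (mem_of_forall_mem_coordinateSubmodule hv)
  · exact mem_coordinateSubmodule.2 fun m' =>
      single_single_smul_mem_of_forall_matrix_smul_mem hW hw i m' m

/-- split case: `O_L` is the ring of integers of a finite extension
`L/ℚ_ℓ` (modelled as a subring `A` of a field `L`, via `Algebra A L`),
`V = ⊕_i L^{n_i} ⊗ V_i`, `E = ∏_i End(O_L^{n_i}) ⊗ Id` acts on the first factors,
`W ≤ V` an `O_L`-submodule and `λ ∈ L` with `λ·E·W ⊆ W`. Then there are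
`O_L`-submodules `Λ_i ≤ V_i` with `λ·(⊕ O_L^{n_i} ⊗ Λ_i) ⊆ W` and
`λ·W ⊆ ⊕ O_L^{n_i} ⊗ Λ_i`. -/
theorem stmt_11 (L : Type*) [Field L] (A : Type*) [CommRing A] [Algebra A L]
    (hinj : Function.Injective (algebraMap A L))
    (ι : Type*) [Fintype ι] (n : ι → ℕ)
    (V : ι → Type*) [∀ i, AddCommGroup (V i)] [∀ i, Module L (V i)]
    [∀ i, Module A (V i)] [∀ i, IsScalarTower A L (V i)]
    (W : Submodule A (∀ i, Fin (n i) → V i))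
    (lam : L)
    (hW : ∀ w ∈ W, ∀ g : ∀ i, Matrix (Fin (n i)) (Fin (n i)) A,
      (fun i m => lam • ∑ m', g i m m' • w i m') ∈ W) :
    ∃ Λ : ∀ i, Submodule A (V i),
      (∀ v : ∀ i, Fin (n i) → V i, (∀ i m, v i m ∈ Λ i) →
        (fun i m => lam • v i m) ∈ W) ∧
      (∀ w ∈ W, ∀ i m, lam • w i m ∈ Λ i) :=
  stmt_11_general L A ι n V W lam hW
end
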